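/- arXiv:1801.09613 — 3 statements merged into one kernel-verified Lean document; each statement's English description precedes it below -/
import Mathlib

section
/- Conservation of the separation constant for the reference Kepler Hamiltonian centered at o₁: if I ⊆ ℝ is an open interval and q, p : I → ℝ³ are differentiable with q(t) ≠ o₁, q'(t) = p(t), and p'(t) = −∇V_{r₁}(q(t)) for all t ∈ I, then t ↦ G_{r₁}(q(t), p(t)) is constant on I. -/
/-! Write `Q = q - o₁` and `k = μ₁ - μ₂`. With `L = Q × p` and the Laplace–Runge–Lenz vector
`A = p × L - k Q / ‖Q‖`, expanding `q × p = L - a e₃ × p` gives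
`G_{r₁} = H_{r₁} + ‖L‖² / 2 - a A_z`. Energy, `‖L‖²` and `A` are first integrals of the Kepler
problem `Q' = p, p' = -k Q / ‖Q‖³`, so `G_{r₁}` is one as well. Since
`‖L‖² = ‖Q‖²‖p‖² - ⟪Q, p⟫²` and `p × L = ‖p‖² Q - ⟪Q, p⟫ p`, these integrals and their
conservation make sense in any real inner product space. -/

noncomputable section

open Real Filter Topology
open scoped RealInnerProductSpace

/-- Euclidean 3-space. -/
abbrev R3 : Type := EuclideanSpace ℝ (Fin 3)

/-- The vector `(x, y, z)` in `R3`. -/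
def vec3 (x y z : ℝ) : R3 := (WithLp.equiv 2 (Fin 3 → ℝ)).symm ![x, y, z]

/-- The first center `o₁ = (0,0,-a)`. -/
def ctr1 (a : ℝ) : R3 := vec3 0 0 (-a)

/-- The second center `o₂ = (0,0,a)`. -/
def ctr2 (a : ℝ) : R3 := vec3 0 0 a

/-- The Euler two-center potential `V(q) = -μ₁/r₁(q) - μ₂/r₂(q)`. -/
def eulerV (a μ1 μ2 : ℝ) (q : R3) : ℝ := -μ1 / ‖q - ctr1 a‖ - μ2 / ‖q - ctr2 a‖

/-- The angular momentum `L_z(q,p) = x p_y - y p_x`. -/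
def angMom (q p : R3) : ℝ := q 0 * p 1 - q 1 * p 0

/-- The cross product `q × p` in `R3`. -/
def cross3 (q p : R3) : R3 :=
  vec3 (q 1 * p 2 - q 2 * p 1) (q 2 * p 0 - q 0 * p 2) (q 0 * p 1 - q 1 * p 0)

/-- The Euler Hamiltonian `H(q,p) = ‖p‖²/2 + V(q)`. -/
def eulerH (a μ1 μ2 : ℝ) (q p : R3) : ℝ := ‖p‖ ^ 2 / 2 + eulerV a μ1 μ2 q

/-- The separation constant
`G(q,p) = H + (‖q×p‖² - a²(pₓ²+p_y²))/2 + a(z+a)μ₁/r₁ - a(z-a)μ₂/r₂`. -/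
def eulerG (a μ1 μ2 : ℝ) (q p : R3) : ℝ :=
  eulerH a μ1 μ2 q p + (‖cross3 q p‖ ^ 2 - a ^ 2 * ((p 0) ^ 2 + (p 1) ^ 2)) / 2
    + a * (q 2 + a) * μ1 / ‖q - ctr1 a‖ - a * (q 2 - a) * μ2 / ‖q - ctr2 a‖

/-- The reference Kepler potential at `o₁`: `V_{r₁}(q) = -(μ₁-μ₂)/r₁(q)`. -/
def kepV1 (a μ1 μ2 : ℝ) (q : R3) : ℝ := -(μ1 - μ2) / ‖q - ctr1 a‖

/-- The reference Kepler Hamiltonian at `o₁`. -/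
def kepH1 (a μ1 μ2 : ℝ) (q p : R3) : ℝ := ‖p‖ ^ 2 / 2 + kepV1 a μ1 μ2 q

/-- The separation constant of the reference Kepler system at `o₁`. -/
def kepG1 (a μ1 μ2 : ℝ) (q p : R3) : ℝ :=
  kepH1 a μ1 μ2 q p + (‖cross3 q p‖ ^ 2 - a ^ 2 * ((p 0) ^ 2 + (p 1) ^ 2)) / 2
    + a * (q 2 + a) * (μ1 - μ2) / ‖q - ctr1 a‖

open InnerProductSpace

section KeplerProblem

variable {E : Type*} [NormedAddCommGroup E] [InnerProductSpace ℝ E]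

theorem HasDerivAt.norm {f : ℝ → E} {f' : E} {x : ℝ} (hf : HasDerivAt f f' x) (h0 : f x ≠ 0) :
    HasDerivAt (fun t => ‖f t‖) (⟪f x, f'⟫ / ‖f x‖) x := by
  have h := hf.norm_sq.sqrt (by positivity)
  simp only [Real.sqrt_sq (norm_nonneg _)] at h
  refine h.congr_deriv ?_
  field_simp

theorem hasGradientAt_neg_div_norm_sub [CompleteSpace E] (k : ℝ) {c x : E} (hx : x ≠ c) :
    HasGradientAt (fun y => -k / ‖y - c‖) ((k / ‖x - c‖ ^ 3) • (x - c)) x := by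
  have hr : ‖x - c‖ ≠ 0 := norm_ne_zero_iff.2 (sub_ne_zero.2 hx)
  have hsq : HasFDerivAt (fun y => ‖y - c‖ ^ 2) (2 • innerSL ℝ (x - c)) x := by
    simpa using ((hasFDerivAt_id x).sub_const c).norm_sq
  have hnorm := hsq.sqrt (by positivity)
  simp only [Real.sqrt_sq (norm_nonneg _)] at hnorm
  have h := ((hasDerivAt_inv hr).comp_hasFDerivAt x hnorm).const_mul (-k)
  refine hasGradientAt_iff_hasFDerivAt.2 (h.congr_fderiv ?_)
  ext v
  simp only [one_div, mul_inv_rev, map_sub, neg_smul, smul_neg, neg_neg,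
    smul_apply, sub_apply, coe_innerSL_apply,
    nsmul_eq_mul, Nat.cast_ofNat, smul_eq_mul, map_smul, toDual_apply_apply]
  field_simp

def keplerEnergy (k : ℝ) (Q p : E) : ℝ := ‖p‖ ^ 2 / 2 - k / ‖Q‖

/-- `‖Q × p‖²`, by Lagrange's identity. -/
def angularMomentumSq (Q p : E) : ℝ := ‖Q‖ ^ 2 * ‖p‖ ^ 2 - ⟪Q, p⟫ ^ 2

/-- The Laplace–Runge–Lenz vector `p × (Q × p) - k Q / ‖Q‖`. -/
def rungeLenz (k : ℝ) (Q p : E) : E := (‖p‖ ^ 2 - k / ‖Q‖) • Q - ⟪Q, p⟫ • p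

variable {k : ℝ} {Q p : ℝ → E} {t : ℝ}

theorem hasDerivAt_keplerEnergy (hQ0 : Q t ≠ 0) (hQ : HasDerivAt Q (p t) t)
    (hp : HasDerivAt p (-(k / ‖Q t‖ ^ 3) • Q t) t) :
    HasDerivAt (fun τ => keplerEnergy k (Q τ) (p τ)) 0 t := by
  have hr : ‖Q t‖ ≠ 0 := norm_ne_zero_iff.2 hQ0
  refine ((hp.norm_sq.div_const 2).sub
    ((hasDerivAt_const t k).div (hQ.norm hQ0) hr)).congr_deriv ?_
  simp only [inner_smul_right, real_inner_comm (Q t)]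
  field_simp
  ring

theorem hasDerivAt_angularMomentumSq {c : ℝ} (hQ : HasDerivAt Q (p t) t)
    (hp : HasDerivAt p (c • Q t) t) :
    HasDerivAt (fun τ => angularMomentumSq (Q τ) (p τ)) 0 t := by
  refine ((hQ.norm_sq.mul hp.norm_sq).sub ((hQ.inner ℝ hp).pow 2)).congr_deriv ?_
  simp only [inner_smul_right, real_inner_self_eq_norm_sq, real_inner_comm (Q t)]
  ring

theorem hasDerivAt_rungeLenz (hQ0 : Q t ≠ 0) (hQ : HasDerivAt Q (p t) t)
    (hp : HasDerivAt p (-(k / ‖Q t‖ ^ 3) • Q t) t) :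
    HasDerivAt (fun τ => rungeLenz k (Q τ) (p τ)) 0 t := by
  have hr : ‖Q t‖ ≠ 0 := norm_ne_zero_iff.2 hQ0
  have h := ((hp.norm_sq.sub ((hasDerivAt_const t k).div (hQ.norm hQ0) hr)).smul hQ).sub
    ((hQ.inner ℝ hp).smul hp)
  refine h.congr_deriv ?_
  simp only [Pi.sub_apply, Pi.div_apply, inner_smul_right, real_inner_self_eq_norm_sq,
    real_inner_comm (Q t)]
  match_scalars
  · field_simp
    ring
  · field_simp
    ring

end KeplerProblem

theorem gradient_kepV1 (a μ1 μ2 : ℝ) {q : R3} (hq : q ≠ ctr1 a) :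
    gradient (kepV1 a μ1 μ2) q = ((μ1 - μ2) / ‖q - ctr1 a‖ ^ 3) • (q - ctr1 a) :=
  (hasGradientAt_neg_div_norm_sub (μ1 - μ2) hq).gradient

theorem kepG1_eq_keplerEnergy_add_angularMomentumSq_sub_rungeLenz (a μ1 μ2 : ℝ) (q p : R3) :
    kepG1 a μ1 μ2 q p = keplerEnergy (μ1 - μ2) (q - ctr1 a) p
      + angularMomentumSq (q - ctr1 a) p / 2 - a * rungeLenz (μ1 - μ2) (q - ctr1 a) p 2 := by
  simp only [kepG1, kepH1, kepV1, keplerEnergy, angularMomentumSq, rungeLenz,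
    EuclideanSpace.norm_sq_eq, PiLp.inner_apply, RCLike.inner_apply, conj_trivial,
    Fin.sum_univ_three, Real.norm_eq_abs, sq_abs, PiLp.sub_apply, PiLp.smul_apply, smul_eq_mul,
    cross3, ctr1, vec3, WithLp.equiv_symm_apply, Matrix.cons_val_zero, Matrix.cons_val_one,
    Matrix.cons_val, sub_zero, sub_neg_eq_add]
  ring

theorem statement3_general (a μ1 μ2 : ℝ) (t₁ t₂ : ℝ) (q p : ℝ → R3)
    (hcent : ∀ t ∈ Set.Ioo t₁ t₂, q t ≠ ctr1 a)
    (hq : ∀ t ∈ Set.Ioo t₁ t₂, HasDerivAt q (p t) t)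
    (hp : ∀ t ∈ Set.Ioo t₁ t₂, HasDerivAt p (-gradient (kepV1 a μ1 μ2) (q t)) t) :
    ∀ s ∈ Set.Ioo t₁ t₂, ∀ t ∈ Set.Ioo t₁ t₂,
      kepG1 a μ1 μ2 (q s) (p s) = kepG1 a μ1 μ2 (q t) (p t) := by
  have hG : ∀ t ∈ Set.Ioo t₁ t₂, HasDerivAt (fun τ => kepG1 a μ1 μ2 (q τ) (p τ)) 0 t := by
    intro t ht
    have hQ0 : q t - ctr1 a ≠ 0 := sub_ne_zero.2 (hcent t ht)
    have hQ : HasDerivAt (fun τ => q τ - ctr1 a) (p t) t := (hq t ht).sub_const _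
    have hP : HasDerivAt p (-((μ1 - μ2) / ‖q t - ctr1 a‖ ^ 3) • (q t - ctr1 a)) t := by
      simpa only [gradient_kepV1 a μ1 μ2 (hcent t ht), neg_smul] using hp t ht
    have hA := (EuclideanSpace.proj (2 : Fin 3)).hasFDerivAt.comp_hasDerivAt t
      (hasDerivAt_rungeLenz hQ0 hQ hP)
    simp_rw [kepG1_eq_keplerEnergy_add_angularMomentumSq_sub_rungeLenz]
    refine (((hasDerivAt_keplerEnergy hQ0 hQ hP).add
      ((hasDerivAt_angularMomentumSq hQ hP).div_const 2)).sub (hA.const_mul a)).congr_deriv ?_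
    simp
  intro s hs t ht
  exact isOpen_Ioo.is_const_of_deriv_eq_zero isPreconnected_Ioo
    (fun τ hτ => (hG τ hτ).differentiableAt.differentiableWithinAt) (fun τ hτ => (hG τ hτ).deriv)
    hs ht

/-- Conservation of `G_{r₁}` along solutions of the reference Kepler
problem centered at `o₁`. -/
theorem statement3 (a μ1 μ2 : ℝ) (ha : 0 < a) (t₁ t₂ : ℝ) (q p : ℝ → R3)
    (hcent : ∀ t ∈ Set.Ioo t₁ t₂, q t ≠ ctr1 a)
    (hq : ∀ t ∈ Set.Ioo t₁ t₂, HasDerivAt q (p t) t)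
    (hp : ∀ t ∈ Set.Ioo t₁ t₂, HasDerivAt p (-gradient (kepV1 a μ1 μ2) (q t)) t) :
    ∀ s ∈ Set.Ioo t₁ t₂, ∀ t ∈ Set.Ioo t₁ t₂,
      kepG1 a μ1 μ2 (q s) (p s) = kepG1 a μ1 μ2 (q t) (p t) :=
  statement3_general a μ1 μ2 t₁ t₂ q p hcent hq hp
end
end

section
/- Critical lines of the spatial Euler problem (with a = 1): let z₀ ∈ ℝ with z₀ ∉ {−1, 1}, let w ∈ ℝ, and put q = (0,0,z₀), p = (0,0,w). Then (i) the total derivative of L_z at (q,p) (as a map ℝ⁶ → ℝ) is zero, so the derivative of the integral map F = (H, L_z, G) at (q,p) is not surjective, i.e. (q,p) is a critical point of F; (ii) L_z(q,p) = 0; and (iii) G(q,p) − H(q,p) = μ₁ − μ₂ if z₀ > 1, G(q,p) − H(q,p) = μ₁ + μ₂ if −1 < z₀ < 1, and G(q,p) − H(q,p) = μ₂ − μ₁ if z₀ < −1. Hence the values of F at such points lie on the critical lines ℓ₂ = {g = h + μ₁ − μ₂, l = 0}, ℓ₃ = {g = h + μ₁ + μ₂, l = 0}, ℓ₁ = {g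 = h + μ₂ − μ₁, l = 0}, respectively. -/
noncomputable section

open Real Filter Topology
open scoped RealInnerProductSpace

/-!
On the `z`-axis the transverse components `x, y, pₓ, p_y` all vanish. Since `L_z` is a sum of
products of two of them, it vanishes there to second order, so its differential, one row of
`dF`, is zero. The same vanishing kills the kinetic part of `G - H`, which leaves
`μ₁ (z+1)/|z+1| - μ₂ (z-1)/|z-1| = μ₁ sign (z+1) - μ₂ sign (z-1)`.
-/

section DivAbs

variable {K : Type*} [Field K] [LinearOrder K] [IsStrictOrderedRing K] {x : K}

lemma div_abs_of_pos (hx : 0 < x) : x / |x| = 1 := by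
  rw [abs_of_pos hx, div_self hx.ne']

lemma div_abs_of_neg (hx : x < 0) : x / |x| = -1 := by
  rw [abs_of_neg hx, div_neg, div_self hx.ne]

end DivAbs

theorem not_surjective_fderiv_of_hasFDerivAt_comp_zero {𝕜 E F G : Type*}
    [NontriviallyNormedField 𝕜] [NormedAddCommGroup E] [NormedSpace 𝕜 E]
    [NormedAddCommGroup F] [NormedSpace 𝕜 F] [NormedAddCommGroup G] [NormedSpace 𝕜 G]
    {f : E → F} {x : E} (φ : F →L[𝕜] G) (hφ : φ ≠ 0)
    (hf : HasFDerivAt (φ ∘ f) (0 : E →L[𝕜] G) x) :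
    ¬ Function.Surjective (fderiv 𝕜 f x) := by
  intro hsurj
  obtain ⟨v, hv⟩ : ∃ v, φ v ≠ 0 := by
    by_contra! h
    exact hφ (ContinuousLinearMap.ext h)
  obtain ⟨u, rfl⟩ := hsurj v
  by_cases hd : DifferentiableAt 𝕜 f x
  · have hcomp : φ.comp (fderiv 𝕜 f x) = 0 :=
      (φ.hasFDerivAt.comp x hd.hasFDerivAt).unique hf
    exact hv (by simpa using congrArg (· u) hcomp)
  · simp [fderiv_zero_of_not_differentiableAt hd] at hv

@[simp] lemma vec3_apply_zero (x y z : ℝ) : vec3 x y z 0 = x := rfl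

@[simp] lemma vec3_apply_one (x y z : ℝ) : vec3 x y z 1 = y := rfl

@[simp] lemma vec3_apply_two (x y z : ℝ) : vec3 x y z 2 = z := rfl

lemma norm_vec3_zero_zero_sub (s t : ℝ) : ‖vec3 0 0 s - vec3 0 0 t‖ = |s - t| := by
  simp [EuclideanSpace.norm_eq, Fin.sum_univ_three, Real.sqrt_sq_eq_abs]

lemma norm_cross3_of_mem_axis {q p : R3} (hq0 : q 0 = 0) (hq1 : q 1 = 0)
    (hp0 : p 0 = 0) (hp1 : p 1 = 0) : ‖cross3 q p‖ = 0 := by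
  simp [cross3, hq0, hq1, hp0, hp1, EuclideanSpace.norm_eq, Fin.sum_univ_three]

lemma hasFDerivAt_angMom_of_mem_axis {q p : R3} (hq0 : q 0 = 0) (hq1 : q 1 = 0)
    (hp0 : p 0 = 0) (hp1 : p 1 = 0) :
    HasFDerivAt (fun x : R3 × R3 => angMom x.1 x.2) (0 : R3 × R3 →L[ℝ] ℝ) (q, p) := by
  have coord₁ (i : Fin 3) : HasFDerivAt (fun x : R3 × R3 => x.1 i)
      ((EuclideanSpace.proj i).comp (ContinuousLinearMap.fst ℝ R3 R3)) (q, p) :=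
    (EuclideanSpace.proj i : R3 →L[ℝ] ℝ).hasFDerivAt.comp (q, p) hasFDerivAt_fst
  have coord₂ (i : Fin 3) : HasFDerivAt (fun x : R3 × R3 => x.2 i)
      ((EuclideanSpace.proj i).comp (ContinuousLinearMap.snd ℝ R3 R3)) (q, p) :=
    (EuclideanSpace.proj i : R3 →L[ℝ] ℝ).hasFDerivAt.comp (q, p) hasFDerivAt_snd
  have h := ((coord₁ 0).mul (coord₂ 1)).sub ((coord₁ 1).mul (coord₂ 0))
  simp only [hq0, hq1, hp0, hp1, zero_smul, add_zero, sub_zero] at h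
  exact h

lemma eulerG_sub_eulerH_axis (a μ1 μ2 z w : ℝ) :
    eulerG a μ1 μ2 (vec3 0 0 z) (vec3 0 0 w) - eulerH a μ1 μ2 (vec3 0 0 z) (vec3 0 0 w)
      = a * μ1 * ((z + a) / |z + a|) - a * μ2 * ((z - a) / |z - a|) := by
  rw [eulerG, norm_cross3_of_mem_axis (by simp) (by simp) (by simp) (by simp), ctr1, ctr2,
    norm_vec3_zero_zero_sub, norm_vec3_zero_zero_sub]
  simp only [vec3_apply_zero, vec3_apply_one, vec3_apply_two, sub_neg_eq_add]
  ring

theorem statement13_general (μ1 μ2 z0 w : ℝ) :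
    fderiv ℝ (fun x : R3 × R3 => angMom x.1 x.2) (vec3 0 0 z0, vec3 0 0 w) = 0 ∧
    ¬ Function.Surjective
        ⇑(fderiv ℝ (fun x : R3 × R3 =>
            (eulerH 1 μ1 μ2 x.1 x.2, angMom x.1 x.2, eulerG 1 μ1 μ2 x.1 x.2))
          (vec3 0 0 z0, vec3 0 0 w)) ∧
    angMom (vec3 0 0 z0) (vec3 0 0 w) = 0 ∧
    (1 < z0 →
      eulerG 1 μ1 μ2 (vec3 0 0 z0) (vec3 0 0 w)
        - eulerH 1 μ1 μ2 (vec3 0 0 z0) (vec3 0 0 w) = μ1 - μ2) ∧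
    (-1 < z0 → z0 < 1 →
      eulerG 1 μ1 μ2 (vec3 0 0 z0) (vec3 0 0 w)
        - eulerH 1 μ1 μ2 (vec3 0 0 z0) (vec3 0 0 w) = μ1 + μ2) ∧
    (z0 < -1 →
      eulerG 1 μ1 μ2 (vec3 0 0 z0) (vec3 0 0 w)
        - eulerH 1 μ1 μ2 (vec3 0 0 z0) (vec3 0 0 w) = μ2 - μ1) := by
  have hL := hasFDerivAt_angMom_of_mem_axis (q := vec3 0 0 z0) (p := vec3 0 0 w)
    (by simp) (by simp) (by simp) (by simp)
  have hφ : (ContinuousLinearMap.fst ℝ ℝ ℝ).comp (ContinuousLinearMap.snd ℝ ℝ (ℝ × ℝ)) ≠ 0 :=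
    fun h => by simpa using congrArg (· ((0 : ℝ), (1 : ℝ), (0 : ℝ))) h
  have hGH := eulerG_sub_eulerH_axis 1 μ1 μ2 z0 w
  refine ⟨hL.fderiv, not_surjective_fderiv_of_hasFDerivAt_comp_zero _ hφ hL,
    by simp [angMom], fun h => ?_, fun h₁ h₂ => ?_, fun h => ?_⟩
  · rw [hGH, div_abs_of_pos (by linarith), div_abs_of_pos (by linarith)]; ring
  · rw [hGH, div_abs_of_pos (by linarith), div_abs_of_neg (by linarith)]; ring
  · rw [hGH, div_abs_of_neg (by linarith), div_abs_of_neg (by linarith)]; ring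

/-- Critical lines of the spatial Euler problem (`a = 1`): at points
`q = (0,0,z₀)`, `p = (0,0,w)` with `z₀ ∉ {−1,1}`, the derivative of `L_z` vanishes,
the derivative of the integral map `F = (H, L_z, G)` is not surjective (so `(q,p)` is a
critical point of `F`), `L_z(q,p) = 0`, and `G − H` equals `μ₁−μ₂`, `μ₁+μ₂`, `μ₂−μ₁`
according as `z₀ > 1`, `−1 < z₀ < 1`, `z₀ < −1`. -/
theorem statement13 (μ1 μ2 z0 w : ℝ) (hz1 : z0 ≠ -1) (hz2 : z0 ≠ 1) :
    fderiv ℝ (fun x : R3 × R3 => angMom x.1 x.2) (vec3 0 0 z0, vec3 0 0 w) = 0 ∧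
    ¬ Function.Surjective
        ⇑(fderiv ℝ (fun x : R3 × R3 =>
            (eulerH 1 μ1 μ2 x.1 x.2, angMom x.1 x.2, eulerG 1 μ1 μ2 x.1 x.2))
          (vec3 0 0 z0, vec3 0 0 w)) ∧
    angMom (vec3 0 0 z0) (vec3 0 0 w) = 0 ∧
    (1 < z0 →
      eulerG 1 μ1 μ2 (vec3 0 0 z0) (vec3 0 0 w)
        - eulerH 1 μ1 μ2 (vec3 0 0 z0) (vec3 0 0 w) = μ1 - μ2) ∧
    (-1 < z0 → z0 < 1 →
      eulerG 1 μ1 μ2 (vec3 0 0 z0) (vec3 0 0 w)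
        - eulerH 1 μ1 μ2 (vec3 0 0 z0) (vec3 0 0 w) = μ1 + μ2) ∧
    (z0 < -1 →
      eulerG 1 μ1 μ2 (vec3 0 0 z0) (vec3 0 0 w)
        - eulerH 1 μ1 μ2 (vec3 0 0 z0) (vec3 0 0 w) = μ2 - μ1) :=
  statement13_general μ1 μ2 z0 w
end
end

section
/- First-derivative short-range estimate for the Euler potential relative to the Kepler potential of strength μ₁ + μ₂: there exists a constant C > 0 such that for every q ∈ ℝ³ with ‖q‖ ≥ 2a one has ‖∇V(q) − (μ₁ + μ₂)q/‖q‖³‖ ≤ C/‖q‖³. -/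
noncomputable section

open Real Filter Topology
open scoped RealInnerProductSpace

/-!
Away from the centres, `∇V(q) = μ₁ K(q - o₁) + μ₂ K(q - o₂)` with the Kepler field
`K x = x / ‖x‖³`, so `∇V(q) - (μ₁ + μ₂) K q = μ₁ (K(q - o₁) - K q) + μ₂ (K(q - o₂) - K q)`.
Moving the centre by `c` with `2‖c‖ ≤ ‖q‖` changes `K` by at most `8‖c‖/‖q‖³`: the radial
factors differ by `‖q - c‖⁻³ - ‖q‖⁻³`, which is controlled by `|‖q‖ - ‖q - c‖| ≤ ‖c‖` and
`‖q - c‖ ≥ ‖q‖/2`. With `‖oᵢ‖ = a` this gives the bound with `C = 8a(|μ₁| + |μ₂|) + 1`.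
-/

section KeplerField

variable {F : Type*} [NormedAddCommGroup F] [InnerProductSpace ℝ F]

def keplerField (x : F) : F := (‖x‖ ^ 3)⁻¹ • x

theorem hasFDerivAt_norm_sub {c q : F} (hq : q ≠ c) :
    HasFDerivAt (fun x => ‖x - c‖) (‖q - c‖⁻¹ • innerSL ℝ (q - c)) q := by
  have hr : ‖q - c‖ ≠ 0 := norm_ne_zero_iff.2 (sub_ne_zero.2 hq)
  convert ((hasFDerivAt_id q).sub_const c).norm_sq.sqrt (pow_ne_zero 2 hr) using 1
  · simp only [id, Real.sqrt_sq (norm_nonneg _)]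
  · ext v
    simp only [map_sub, smul_apply, sub_apply, coe_innerSL_apply, smul_eq_mul, id_eq,
      Real.sqrt_sq (norm_nonneg _), one_div, mul_inv_rev, ContinuousLinearMap.comp_id,
      nsmul_eq_mul, Nat.cast_ofNat]
    field_simp

theorem hasGradientAt_neg_div_norm_sub_s18 [CompleteSpace F] (μ : ℝ) {c q : F} (hq : q ≠ c) :
    HasGradientAt (fun x => -μ / ‖x - c‖) (μ • keplerField (q - c)) q := by
  have hr : ‖q - c‖ ≠ 0 := norm_ne_zero_iff.2 (sub_ne_zero.2 hq)
  have hφ : HasDerivAt (fun t : ℝ => -μ / t) (μ / ‖q - c‖ ^ 2) ‖q - c‖ := by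
    simpa [div_eq_mul_inv] using (hasDerivAt_inv hr).const_mul (-μ)
  rw [hasGradientAt_iff_hasFDerivAt]
  refine (hφ.comp_hasFDerivAt q (hasFDerivAt_norm_sub hq)).congr_fderiv ?_
  ext v
  simp only [InnerProductSpace.toDual_apply_apply, smul_apply, innerSL_apply_apply,
    keplerField, real_inner_smul_left, smul_eq_mul]
  field_simp

theorem abs_inv_pow_three_sub_inv_pow_three_mul_le {r s ρ : ℝ} (hr : 0 < r) (hrs : r ≤ 2 * s)
    (hρ : |r - s| ≤ ρ) : |(s ^ 3)⁻¹ - (r ^ 3)⁻¹| * s ≤ 7 * ρ / r ^ 3 := by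
  have hs : 0 < s := by linarith
  have hρ0 : 0 ≤ ρ := (abs_nonneg _).trans hρ
  have hfactor : (s ^ 3)⁻¹ - (r ^ 3)⁻¹ = (r - s) * (r ^ 2 + r * s + s ^ 2) / (s ^ 3 * r ^ 3) := by
    field_simp
    ring
  rw [hfactor, abs_div, abs_mul, abs_of_pos (by positivity : 0 < r ^ 2 + r * s + s ^ 2),
    abs_of_pos (by positivity : 0 < s ^ 3 * r ^ 3), div_mul_eq_mul_div,
    div_le_div_iff₀ (by positivity) (by positivity)]
  have hquad : r ^ 2 + r * s + s ^ 2 ≤ 7 * s ^ 2 := by nlinarith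
  calc |r - s| * (r ^ 2 + r * s + s ^ 2) * s * r ^ 3 ≤ ρ * (7 * s ^ 2) * s * r ^ 3 := by gcongr
    _ = 7 * ρ * (s ^ 3 * r ^ 3) := by ring

theorem norm_keplerField_sub_sub_le {c q : F} (hc : 2 * ‖c‖ ≤ ‖q‖) :
    ‖keplerField (q - c) - keplerField q‖ ≤ 8 * ‖c‖ / ‖q‖ ^ 3 := by
  rcases eq_or_ne c 0 with rfl | hc0
  · simp
  have hr : 0 < ‖q‖ := by linarith [norm_pos_iff.2 hc0]
  have hdist : |‖q‖ - ‖q - c‖| ≤ ‖c‖ := by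
    simpa using abs_norm_sub_norm_le q (q - c)
  have hrs : ‖q‖ ≤ 2 * ‖q - c‖ := by linarith [(abs_le.1 hdist).2]
  have hdecomp : keplerField (q - c) - keplerField q
      = ((‖q - c‖ ^ 3)⁻¹ - (‖q‖ ^ 3)⁻¹) • (q - c) - (‖q‖ ^ 3)⁻¹ • c := by
    simp only [keplerField]
    module
  calc ‖keplerField (q - c) - keplerField q‖
      ≤ |(‖q - c‖ ^ 3)⁻¹ - (‖q‖ ^ 3)⁻¹| * ‖q - c‖ + ‖c‖ / ‖q‖ ^ 3 := by
        rw [hdecomp]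
        refine (norm_sub_le _ _).trans_eq ?_
        rw [norm_smul, norm_smul, Real.norm_eq_abs, Real.norm_eq_abs, abs_inv, abs_pow,
          abs_norm, inv_mul_eq_div]
    _ ≤ 7 * ‖c‖ / ‖q‖ ^ 3 + ‖c‖ / ‖q‖ ^ 3 := by
        gcongr
        exact abs_inv_pow_three_sub_inv_pow_three_mul_le hr hrs hdist
    _ = 8 * ‖c‖ / ‖q‖ ^ 3 := by ring

end KeplerField

theorem norm_vec3_zero_zero (z : ℝ) : ‖vec3 0 0 z‖ = |z| := by
  simp [vec3, EuclideanSpace.norm_eq, Fin.sum_univ_three, Real.sqrt_sq_eq_abs]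

theorem norm_ctr1 {a : ℝ} (ha : 0 ≤ a) : ‖ctr1 a‖ = a := by
  rw [ctr1, norm_vec3_zero_zero, abs_neg, abs_of_nonneg ha]

theorem norm_ctr2 {a : ℝ} (ha : 0 ≤ a) : ‖ctr2 a‖ = a := by
  rw [ctr2, norm_vec3_zero_zero, abs_of_nonneg ha]

theorem hasGradientAt_eulerV {a μ1 μ2 : ℝ} {q : R3} (hq1 : q ≠ ctr1 a) (hq2 : q ≠ ctr2 a) :
    HasGradientAt (eulerV a μ1 μ2)
      (μ1 • keplerField (q - ctr1 a) + μ2 • keplerField (q - ctr2 a)) q := by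
  have h1 := hasGradientAt_iff_hasFDerivAt.1 (hasGradientAt_neg_div_norm_sub_s18 μ1 hq1)
  -- `eulerV` subtracts `μ₂ / r₂ = -(-μ₂) / r₂`
  have h2 := hasGradientAt_iff_hasFDerivAt.1 (hasGradientAt_neg_div_norm_sub_s18 (-μ2) hq2)
  rw [hasGradientAt_iff_hasFDerivAt, ← sub_neg_eq_add, ← neg_smul, map_sub]
  refine (h1.sub h2).congr_of_eventuallyEq (.of_forall fun x => ?_)
  simp [eulerV]

/-- First-derivative short-range estimate for the Euler potential
relative to the Kepler potential of strength `μ₁ + μ₂` centered at the origin: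
there is `C > 0` with `‖∇V(q) − (μ₁+μ₂)q/‖q‖³‖ ≤ C/‖q‖³` whenever `‖q‖ ≥ 2a`. -/
theorem statement18 (a μ1 μ2 : ℝ) (ha : 0 < a) :
    ∃ C > 0, ∀ q : R3, 2 * a ≤ ‖q‖ →
      ‖gradient (eulerV a μ1 μ2) q - ((μ1 + μ2) / ‖q‖ ^ 3) • q‖ ≤ C / ‖q‖ ^ 3 := by
  refine ⟨8 * a * (|μ1| + |μ2|) + 1, by positivity, fun q hq => ?_⟩
  have hc1 : 2 * ‖ctr1 a‖ ≤ ‖q‖ := by rwa [norm_ctr1 ha.le]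
  have hc2 : 2 * ‖ctr2 a‖ ≤ ‖q‖ := by rwa [norm_ctr2 ha.le]
  have hq1 : q ≠ ctr1 a := by rintro rfl; linarith [norm_ctr1 ha.le]
  have hq2 : q ≠ ctr2 a := by rintro rfl; linarith [norm_ctr2 ha.le]
  have hsplit : μ1 • keplerField (q - ctr1 a) + μ2 • keplerField (q - ctr2 a)
        - ((μ1 + μ2) / ‖q‖ ^ 3) • q
      = μ1 • (keplerField (q - ctr1 a) - keplerField q)
        + μ2 • (keplerField (q - ctr2 a) - keplerField q) := by
    rw [div_eq_mul_inv, mul_smul, ← keplerField]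
    module
  rw [(hasGradientAt_eulerV hq1 hq2).gradient, hsplit]
  calc _ ≤ |μ1| * ‖keplerField (q - ctr1 a) - keplerField q‖
        + |μ2| * ‖keplerField (q - ctr2 a) - keplerField q‖ := by
        refine (norm_add_le _ _).trans_eq ?_
        rw [norm_smul, norm_smul, Real.norm_eq_abs, Real.norm_eq_abs]
    _ ≤ |μ1| * (8 * a / ‖q‖ ^ 3) + |μ2| * (8 * a / ‖q‖ ^ 3) := by
        gcongr
        · simpa [norm_ctr1 ha.le] using norm_keplerField_sub_sub_le hc1
        · simpa [norm_ctr2 ha.le] using norm_keplerField_sub_sub_le hc2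
    _ = 8 * a * (|μ1| + |μ2|) / ‖q‖ ^ 3 := by ring
    _ ≤ (8 * a * (|μ1| + |μ2|) + 1) / ‖q‖ ^ 3 := by gcongr; linarith
end
end
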